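/- arXiv:hep-th/0602057 — 7 statements merged into one kernel-verified Lean document; each statement's English description precedes it below -/
import Mathlib

section
/- Let r ≥ 1 and work in the field ℚ(q_1,…,q_r) of rational functions in r indeterminates over ℚ. Let λ_1 ≥ λ_2 ≥ … ≥ λ_r ≥ 0 be integers, and let H_m denote the complete homogeneous symmetric polynomial of degree m in the 2r elements q_1,…,q_r, q_1^{−1},…,q_r^{−1}. Define the r×r matrix M by M_{1j} = H_{λ_j + 1 − j} (first row) and M_{ij} = H_{λ_j + i − j} + H_{λ_j + 2 − i − j} for 2 ≤ i ≤ r. Then (the Jacobi–Trudy identity for Sp(2r), in alternant form): det[ q_i^{λ_j + r + 1 − j} − q_i^{−(λ_j + r + 1 − j)} ]_{i,j=1}^{r} = det M · det[ q_i^{r + 1 − j} − q_i^{−(r + 1 − j)} ]_{i,j=1}^{r}. -/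
/-!
Let `G(t) = ∏ⱼ 1 / ((1 - qⱼ t)(1 - qⱼ⁻¹ t)) = ∑ₘ Hₘ tᵐ` and
`Pᵢ(t) = ∏_{j ≠ i} (1 - qⱼ t)(1 - qⱼ⁻¹ t)`, a palindromic polynomial of degree `2r - 2`.
Since `Pᵢ G = 1 / ((1 - qᵢ t)(1 - qᵢ⁻¹ t))`, comparing coefficients of `t^(a-1)` gives
`qᵢ^a - qᵢ^(-a) = (qᵢ - qᵢ⁻¹) ∑ₖ [tᵏ]Pᵢ · H_{a-1-k}`, and folding this sum around its centre
`k = r - 1` by palindromy turns it into `∑ₚ Cᵢₚ (H_{a-r+p} + H_{a-r-p})` (a single `H_{a-r}` for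
`p = 0`) with `C` independent of `a`. Hence the alternant with exponents `λⱼ + r - j` is
`C · M(λ)`; as `M(0)` is unitriangular, the alternant with exponents `r - j` is `det C`.
-/

open Finset MvPolynomial

/-- Complete homogeneous symmetric polynomial of degree `m` (`ℤ`-indexed; zero for `m < 0`)
in the family of elements `x : ι → R`: the sum of all monomials of total degree `m`. -/
noncomputable def hpoly {R : Type*} [CommRing R] {ι : Type*} [Fintype ι] [DecidableEq ι]
    (x : ι → R) (m : ℤ) : R :=
  if m < 0 then 0
  else ∑ d ∈ (Fintype.piFinset fun _ : ι => Finset.range (m.toNat + 1)).filter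
      (fun d => ∑ i, d i = m.toNat),
    ∏ i, x i ^ d i

section GeomSeries

open scoped Polynomial PowerSeries

variable {R : Type*} [CommRing R]

noncomputable def geomSeries (a : R) : R⟦X⟧ := PowerSeries.rescale a (PowerSeries.mk 1)

@[simp]
lemma coeff_geomSeries (a : R) (n : ℕ) : PowerSeries.coeff n (geomSeries a) = a ^ n := by
  simp [geomSeries, PowerSeries.coeff_rescale]

lemma geomSeries_mul_one_sub (a : R) :
    geomSeries a * (1 - PowerSeries.C a * PowerSeries.X) = 1 := by
  simpa [geomSeries, PowerSeries.rescale_X] using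
    congrArg (PowerSeries.rescale a) (PowerSeries.mk_one_mul_one_sub_eq_one R)

lemma geomSeries_sub_geomSeries (a b : R) :
    geomSeries a - geomSeries b =
      PowerSeries.C (a - b) * PowerSeries.X * (geomSeries a * geomSeries b) := by
  rw [map_sub]
  linear_combination (geomSeries b) * geomSeries_mul_one_sub a -
    (geomSeries a) * geomSeries_mul_one_sub b

lemma pow_succ_sub_pow_succ_eq_mul_coeff (a b : R) (n : ℕ) :
    a ^ (n + 1) - b ^ (n + 1) =
      (a - b) * PowerSeries.coeff n (geomSeries a * geomSeries b) := by
  have h := congrArg (PowerSeries.coeff (n + 1)) (geomSeries_sub_geomSeries a b)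
  rwa [map_sub, coeff_geomSeries, coeff_geomSeries, mul_assoc, PowerSeries.coeff_C_mul,
    PowerSeries.coeff_succ_X_mul] at h

variable {ι : Type*} [Fintype ι] [DecidableEq ι]

lemma hpoly_of_neg (x : ι → R) {m : ℤ} (hm : m < 0) : hpoly x m = 0 := if_pos hm

lemma coeff_prod_geomSeries (x : ι → R) (n : ℕ) :
    PowerSeries.coeff n (∏ i, geomSeries (x i)) = hpoly x n := by
  rw [PowerSeries.coeff_prod, hpoly, if_neg (by omega), Int.toNat_natCast]
  refine Finset.sum_bij' (fun l _ => ⇑l) (fun d _ => Finsupp.equivFunOnFinite.symm d)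
    (fun l hl => ?_) (fun d hd => ?_) (fun l _ => by simp) (fun d _ => rfl)
    (fun l _ => by simp)
  · rw [mem_finsuppAntidiag] at hl
    simp only [mem_filter, Fintype.mem_piFinset, mem_range]
    refine ⟨fun i => Nat.lt_succ_of_le ?_, by simpa using hl.1⟩
    exact hl.1 ▸ single_le_sum (fun j _ => Nat.zero_le _) (mem_univ i)
  · simp only [mem_filter] at hd
    simpa [mem_finsuppAntidiag] using hd.2

lemma hpoly_zero (x : ι → R) : hpoly x 0 = 1 := by
  simpa [← PowerSeries.coeff_zero_eq_constantCoeff_apply] using (coeff_prod_geomSeries x 0).symm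

lemma coeff_coe_mul_prod_geomSeries {p : R[X]} {N : ℕ} (hp : p.natDegree < N) (x : ι → R)
    (n : ℕ) :
    PowerSeries.coeff n ((p : R⟦X⟧) * ∏ i, geomSeries (x i)) =
      ∑ k ∈ range N, p.coeff k * hpoly x (n - k) := by
  conv_lhs => rw [p.as_sum_range' N hp]
  rw [← Polynomial.coeToPowerSeries.ringHom_apply, map_sum, sum_mul, map_sum]
  refine sum_congr rfl fun k _ => ?_
  rw [Polynomial.coeToPowerSeries.ringHom_apply, ← Polynomial.C_mul_X_pow_eq_monomial,
    Polynomial.coe_mul, Polynomial.coe_C, Polynomial.coe_pow, Polynomial.coe_X, mul_assoc,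
    PowerSeries.coeff_C_mul, PowerSeries.coeff_X_pow_mul']
  split_ifs with hk
  · rw [coeff_prod_geomSeries, Nat.cast_sub hk]
  · rw [hpoly_of_neg x (by omega), mul_zero]

end GeomSeries

section PairProd

open scoped Polynomial PowerSeries

variable {K : Type*} [Field K] {ι : Type*}

noncomputable def pairFactor (a : K) : K[X] :=
  (1 - Polynomial.C a * Polynomial.X) * (1 - Polynomial.C a⁻¹ * Polynomial.X)

lemma natDegree_pairFactor_le (a : K) : (pairFactor a).natDegree ≤ 2 := by
  unfold pairFactor
  compute_degree!

lemma reflect_pairFactor {a : K} (ha : a ≠ 0) : (pairFactor a).reflect 2 = pairFactor a := by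
  have h : pairFactor a = Polynomial.C 1 * Polynomial.X ^ 0 -
      Polynomial.C (a + a⁻¹) * Polynomial.X ^ 1 + Polynomial.C 1 * Polynomial.X ^ 2 := by
    simp only [pairFactor, Polynomial.C_add, map_one]
    linear_combination (Polynomial.X ^ 2 : K[X]) *
      (by rw [← Polynomial.C_mul, mul_inv_cancel₀ ha, map_one] :
        Polynomial.C a * Polynomial.C a⁻¹ = (1 : K[X]))
  rw [h]
  simp only [Polynomial.reflect_add, Polynomial.reflect_sub, Polynomial.reflect_C_mul_X_pow,
    Polynomial.revAt_le (by norm_num : 0 ≤ 2), Polynomial.revAt_le (by norm_num : 1 ≤ 2),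
    Polynomial.revAt_le le_rfl]
  ring

noncomputable def pairProd (q : ι → K) (s : Finset ι) : K[X] := ∏ j ∈ s, pairFactor (q j)

lemma natDegree_pairProd_le (q : ι → K) (s : Finset ι) : (pairProd q s).natDegree ≤ 2 * #s := by
  refine (Polynomial.natDegree_prod_le _ _).trans ?_
  simpa [mul_comm] using sum_le_card_nsmul s _ 2 fun j _ => natDegree_pairFactor_le (q j)

lemma reflect_pairProd {q : ι → K} {s : Finset ι} (hq : ∀ j ∈ s, q j ≠ 0) :
    (pairProd q s).reflect (2 * #s) = pairProd q s := by
  induction s using Finset.cons_induction with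
  | empty => simp [pairProd, Polynomial.reflect_one]
  | cons a s ha ih =>
    simp only [mem_cons, forall_eq_or_imp] at hq
    rw [card_cons, mul_add_one, add_comm, pairProd, prod_cons, ← pairProd,
      Polynomial.reflect_mul _ _ (natDegree_pairFactor_le _) (natDegree_pairProd_le q s),
      reflect_pairFactor hq.1, ih hq.2]

lemma coeff_pairProd_symm {q : ι → K} {s : Finset ι} (hq : ∀ j ∈ s, q j ≠ 0) {k : ℕ}
    (hk : k ≤ 2 * #s) : (pairProd q s).coeff (2 * #s - k) = (pairProd q s).coeff k := by
  conv_rhs => rw [← reflect_pairProd hq, Polynomial.coeff_reflect, Polynomial.revAt_le hk]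

lemma coe_pairProd_mul_prod_geomSeries (q : ι → K) (s : Finset ι) :
    (pairProd q s : K⟦X⟧) * ∏ j ∈ s, geomSeries (q j) * geomSeries (q j)⁻¹ = 1 := by
  rw [pairProd, ← Polynomial.coeToPowerSeries.ringHom_apply, map_prod, ← prod_mul_distrib]
  refine prod_eq_one fun j _ => ?_
  simp only [pairFactor, map_mul, map_sub, map_one, Polynomial.coeToPowerSeries.ringHom_apply,
    Polynomial.coe_C, Polynomial.coe_X]
  linear_combination
    ((1 - PowerSeries.C (q j)⁻¹ * PowerSeries.X) * geomSeries (q j)⁻¹) *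
      geomSeries_mul_one_sub (q j) + geomSeries_mul_one_sub (q j)⁻¹

end PairProd

lemma sum_range_two_mul_sub_one_eq_sum_fin {M : Type*} [AddCommMonoid M] (f : ℕ → M) (r : ℕ) :
    ∑ k ∈ range (2 * r - 1), f k =
      ∑ p : Fin r, if (p : ℕ) = 0 then f (r - 1) else f (r - 1 - p) + f (r - 1 + p) := by
  cases r with
  | zero => simp
  | succ n =>
    rw [show 2 * (n + 1) - 1 = n + (n + 1) by omega, sum_range_add, sum_range_succ',
      Fin.sum_univ_succ, ← sum_range_reflect]
    simp only [Fin.val_zero, if_true, Fin.val_succ, Nat.add_one_ne_zero, if_false,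
      Nat.add_sub_cancel, add_zero]
    rw [Fin.sum_univ_eq_sum_range (fun p => f (n - (p + 1)) + f (n + (p + 1))), sum_add_distrib]
    simp only [Nat.sub_sub, Nat.add_comm 1]
    abel

section RowIdentity

variable {K : Type*} [Field K] {ι : Type*} [Fintype ι] [DecidableEq ι] (q : ι → K)

lemma geomSeries_mul_geomSeries_inv_eq (i : ι) :
    geomSeries (q i) * geomSeries (q i)⁻¹ =
      pairProd q (univ.erase i) * ∏ j, geomSeries (Sum.elim q (fun j => (q j)⁻¹) j) := by
  rw [Fintype.prod_sum_type]
  simp only [Sum.elim_inl, Sum.elim_inr]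
  rw [← prod_mul_distrib, ← mul_prod_erase _ _ (mem_univ i), mul_left_comm,
    coe_pairProd_mul_prod_geomSeries, mul_one]

lemma pow_succ_sub_inv_pow_succ_eq_sum (i : ι) (n : ℕ) :
    q i ^ (n + 1) - (q i)⁻¹ ^ (n + 1) = (q i - (q i)⁻¹) *
      ∑ k ∈ range (2 * Fintype.card ι - 1),
        (pairProd q (univ.erase i)).coeff k * hpoly (Sum.elim q fun j => (q j)⁻¹) (n - k) := by
  have hdeg : (pairProd q (univ.erase i)).natDegree < 2 * Fintype.card ι - 1 := by
    have := natDegree_pairProd_le q (univ.erase i)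
    have := Fintype.card_pos_iff.mpr ⟨i⟩
    rw [card_erase_of_mem (mem_univ i), card_univ] at *
    omega
  rw [pow_succ_sub_pow_succ_eq_mul_coeff, geomSeries_mul_geomSeries_inv_eq,
    coeff_coe_mul_prod_geomSeries hdeg]

end RowIdentity

lemma zpow_sub_zpow_neg_eq_sum {K : Type*} [Field K] {r : ℕ} {q : Fin r → K}
    (hq : ∀ j, q j ≠ 0) (i : Fin r) {a : ℤ} (ha : 0 < a) :
    q i ^ a - q i ^ (-a) = ∑ p : Fin r,
      (q i - (q i)⁻¹) * (pairProd q (univ.erase i)).coeff (r - 1 - p) *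
        if (p : ℕ) = 0 then hpoly (Sum.elim q fun j => (q j)⁻¹) (a - r)
        else hpoly (Sum.elim q fun j => (q j)⁻¹) (a - r + p) +
          hpoly (Sum.elim q fun j => (q j)⁻¹) (a - r - p) := by
  obtain ⟨n, rfl⟩ : ∃ n : ℕ, a = n + 1 := ⟨(a - 1).toNat, by omega⟩
  have hr := i.pos
  rw [← Nat.cast_succ, zpow_neg, zpow_natCast, ← inv_pow, pow_succ_sub_inv_pow_succ_eq_sum,
    Fintype.card_fin, mul_sum, sum_range_two_mul_sub_one_eq_sum_fin]
  refine sum_congr rfl fun p _ => ?_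
  have hp := p.isLt
  split_ifs with hp0
  · rw [hp0, Nat.sub_zero, show (n : ℤ) - (r - 1 : ℕ) = n.succ - r by omega, mul_assoc]
  · have hcard : #(univ.erase i) = r - 1 := by simp
    have hcoeff : (pairProd q (univ.erase i)).coeff (r - 1 + p) =
        (pairProd q (univ.erase i)).coeff (r - 1 - p) := by
      rw [show r - 1 + p = 2 * #(univ.erase i) - (r - 1 - p) by omega,
        coeff_pairProd_symm (fun j _ => hq j) (by omega)]
    rw [hcoeff, show (n : ℤ) - (r - 1 - p : ℕ) = n.succ - r + p by omega,
      show (n : ℤ) - (r - 1 + p : ℕ) = n.succ - r - p by omega]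
    ring

section Determinants

variable {K : Type*} [Field K] {r : ℕ}

def alternant (q : Fin r → K) (e : Fin r → ℤ) : Matrix (Fin r) (Fin r) K :=
  Matrix.of fun i j => q i ^ e j - q i ^ (-e j)

def jacobiTrudyMatrix {R : Type*} [Add R] (H : ℤ → R) (lam : Fin r → ℤ) :
    Matrix (Fin r) (Fin r) R :=
  Matrix.of fun i j =>
    if (i : ℕ) = 0 then H (lam j - j) else H (lam j + i - j) + H (lam j - i - j)

noncomputable def pairCoeffMatrix (q : Fin r → K) : Matrix (Fin r) (Fin r) K :=
  Matrix.of fun i p => (q i - (q i)⁻¹) * (pairProd q (univ.erase i)).coeff (r - 1 - p)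

lemma alternant_eq_pairCoeffMatrix_mul {q : Fin r → K} (hq : ∀ j, q j ≠ 0) {lam : Fin r → ℤ}
    (hlam : ∀ j, 0 < lam j + r - j) :
    alternant q (fun j => lam j + r - j) =
      pairCoeffMatrix q * jacobiTrudyMatrix (hpoly (Sum.elim q fun j => (q j)⁻¹)) lam := by
  ext i j
  rw [alternant, Matrix.of_apply, zpow_sub_zpow_neg_eq_sum hq i (hlam j), Matrix.mul_apply]
  refine sum_congr rfl fun p _ => ?_
  simp only [pairCoeffMatrix, jacobiTrudyMatrix, Matrix.of_apply]
  congr 1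
  split_ifs <;> ring_nf

lemma det_jacobiTrudyMatrix_zero {R : Type*} [CommRing R] {ι : Type*} [Fintype ι]
    [DecidableEq ι] (x : ι → R) : (jacobiTrudyMatrix (r := r) (hpoly x) 0).det = 1 := by
  have hlower : (jacobiTrudyMatrix (r := r) (hpoly x) 0).IsLowerTriangular := by
    intro p j (hpj : p < j)
    have : (p : ℤ) < j := by exact_mod_cast hpj
    simp only [jacobiTrudyMatrix, Matrix.of_apply, Pi.zero_apply, zero_add, zero_sub]
    split_ifs
    · exact hpoly_of_neg x (by omega)
    · rw [hpoly_of_neg x (show ((p : ℕ) : ℤ) - j < 0 by omega),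
        hpoly_of_neg x (show -((p : ℕ) : ℤ) - j < 0 by omega), add_zero]
  rw [Matrix.det_of_isLowerTriangular _ hlower]
  refine prod_eq_one fun p _ => ?_
  simp only [jacobiTrudyMatrix, Matrix.of_apply, Pi.zero_apply, zero_add, zero_sub]
  split_ifs with hp
  · rw [hp, Nat.cast_zero, neg_zero, hpoly_zero]
  · rw [sub_self, hpoly_zero, hpoly_of_neg x (by omega), add_zero]

theorem det_alternant_eq_mul {q : Fin r → K} (hq : ∀ j, q j ≠ 0) {lam : Fin r → ℤ}
    (hlam : ∀ j, 0 < lam j + r - j) :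
    (alternant q fun j => lam j + r - j).det =
      (jacobiTrudyMatrix (hpoly (Sum.elim q fun j => (q j)⁻¹)) lam).det *
        (alternant q fun j => r - j).det := by
  have hdenominator : alternant q (fun j => r - j) = pairCoeffMatrix q *
      jacobiTrudyMatrix (hpoly (Sum.elim q fun j => (q j)⁻¹)) 0 := by
    simpa using alternant_eq_pairCoeffMatrix_mul hq (lam := 0) fun j => by simp [j.isLt]
  rw [alternant_eq_pairCoeffMatrix_mul hq hlam, hdenominator, Matrix.det_mul, Matrix.det_mul,
    det_jacobiTrudyMatrix_zero, mul_one, mul_comm]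

end Determinants

theorem sp_jacobi_trudy_general (r : ℕ)
    (lam : Fin r → ℤ) (hnonneg : ∀ j, 0 ≤ lam j) :
    let K := FractionRing (MvPolynomial (Fin r) ℚ)
    let q : Fin r → K := fun i => algebraMap (MvPolynomial (Fin r) ℚ) K (X i)
    let H : ℤ → K := hpoly (Sum.elim q fun i => (q i)⁻¹)
    Matrix.det (Matrix.of fun i j : Fin r =>
        q i ^ (lam j + r - (j.val : ℤ)) - q i ^ (-(lam j + r - (j.val : ℤ)))) =
    Matrix.det (Matrix.of fun i j : Fin r =>
        if (i : ℕ) = 0 then H (lam j - (j.val : ℤ))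
        else H (lam j + (i.val : ℤ) - (j.val : ℤ)) + H (lam j - (i.val : ℤ) - (j.val : ℤ))) *
    Matrix.det (Matrix.of fun i j : Fin r =>
        q i ^ ((r : ℤ) - (j.val : ℤ)) - q i ^ (-((r : ℤ) - (j.val : ℤ)))) := by
  intro K q H
  have hq : ∀ i, q i ≠ 0 := fun i =>
    (map_ne_zero_iff _ (IsFractionRing.injective _ K)).mpr (X_ne_zero i)
  exact det_alternant_eq_mul hq fun j => by have := hnonneg j; omega

/-- Jacobi–Trudy identity for Sp(2r), in alternant form, in ℚ(q₁,…,q_r). -/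
theorem sp_jacobi_trudy (r : ℕ) (hr : 1 ≤ r)
    (lam : Fin r → ℤ) (hanti : Antitone lam) (hnonneg : ∀ j, 0 ≤ lam j) :
    let K := FractionRing (MvPolynomial (Fin r) ℚ)
    let q : Fin r → K := fun i => algebraMap (MvPolynomial (Fin r) ℚ) K (X i)
    let H : ℤ → K := hpoly (Sum.elim q fun i => (q i)⁻¹)
    Matrix.det (Matrix.of fun i j : Fin r =>
        q i ^ (lam j + r - (j.val : ℤ)) - q i ^ (-(lam j + r - (j.val : ℤ)))) =
    Matrix.det (Matrix.of fun i j : Fin r =>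
        if (i : ℕ) = 0 then H (lam j - (j.val : ℤ))
        else H (lam j + (i.val : ℤ) - (j.val : ℤ)) + H (lam j - (i.val : ℤ) - (j.val : ℤ))) *
    Matrix.det (Matrix.of fun i j : Fin r =>
        q i ^ ((r : ℤ) - (j.val : ℤ)) - q i ^ (-((r : ℤ) - (j.val : ℤ)))) :=
  sp_jacobi_trudy_general r lam hnonneg
end

section
/- Let r ≥ 1 and work in the field ℚ(u_1,…,u_r) of rational functions in r indeterminates over ℚ. Then ∏_{i=1}^{r} (u_i + u_i^{−1}) · det[ u_i^{2r + 1 − 2j} − u_i^{−(2r + 1 − 2j)} ]_{i,j=1}^{r} = det[ u_i^{2(r + 1 − j)} − u_i^{−2(r + 1 − j)} ]_{i,j=1}^{r}. (With q_i = u_i^2, the right-hand side is the Weyl denominator of Sp(2r) and the left-hand factor det[ u_i^{2r+1−2j} − u_i^{−(2r+1−2j)} ] is the Weyl denominator of Spin(2r+1); since the spinor-shifted alternants of Spin(2r+1) coincide with the shifted alternants of Sp(2r), this identity is equivalent to the character-level relation χ^{Spin(2r+1)}_{λ+Λ_r} = χ^{Spin(2r+1)}_{Λ_r} · χ^{Sp(2r)}_{λ}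 for every dominant tensor weight λ.) -/
open Finset MvPolynomial

/-!
Multiplying row `i` by `uᵢ + uᵢ⁻¹` and using
`(u + u⁻¹)(u^a - u^{-a}) = (u^{a+1} - u^{-(a+1)}) + (u^{a-1} - u^{-(a-1)})` turns column `j` of the
odd-exponent alternant (exponent `2r - 1 - 2j`) into the sum of columns `j` and `j + 1` of the
even-exponent alternant (exponents `2(r - j)`; the would-be column `j = r` is zero). Adding to each
column its successor is right multiplication by a unitriangular matrix, so the determinant is
unchanged.
-/

namespace Matrix

theorem det_of_add_succ_column {R : Type*} [CommRing R] {n : ℕ} (v : ℕ → Fin n → R)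
    (hv : v n = 0) :
    det (of fun i j : Fin n => v j i + v (j + 1) i) = det (of fun i j : Fin n => v j i) := by
  let M : Matrix (Fin n) (Fin n) R := of fun k j => if (k : ℕ) = j ∨ (k : ℕ) = j + 1 then 1 else 0
  have hM : M.det = 1 := by
    rw [det_of_isLowerTriangular M fun k j (hkj : (k : ℕ) < j) => if_neg (by omega)]
    exact prod_eq_one fun k _ => if_pos (Or.inl rfl)
  suffices of (fun i j : Fin n => v j i + v (j + 1) i) = of (fun i j : Fin n => v j i) * M by
    rw [this, det_mul, hM, mul_one]
  ext i j
  have hj := j.isLt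
  have hsplit : ∀ k : ℕ, (if k = j ∨ k = j + 1 then v k i else 0) =
      (if k = j then v k i else 0) + (if k = j + 1 then v k i else 0) := by
    intro k; split_ifs <;> first | omega | simp
  calc v j i + v (j + 1) i
      = ∑ k ∈ range (n + 1), if k = j ∨ k = j + 1 then v k i else 0 := by
        simp only [hsplit, sum_add_distrib, sum_ite_eq', mem_range]
        rw [if_pos (by omega), if_pos (by omega)]
    _ = ∑ k : Fin n, v k i * M k j := by
        rw [sum_range_succ, hv, ← Fin.sum_univ_eq_sum_range
          (fun k => if k = j ∨ k = j + 1 then v k i else 0)]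
        simp [M]

end Matrix

theorem add_inv_mul_zpow_sub_zpow_neg {K : Type*} [Field K] (u : K) (a : ℤ) :
    (u + u⁻¹) * (u ^ a - u ^ (-a)) =
      (u ^ (a + 1) - u ^ (-(a + 1))) + (u ^ (a - 1) - u ^ (-(a - 1))) := by
  rcases eq_or_ne u 0 with rfl | hu
  -- with `0⁻¹ = 0` and `0 ^ 0 = 1` every bracket is `0`
  · simp only [zero_zpow_eq]
    split_ifs <;> first | omega | simp
  rw [neg_add, neg_sub, zpow_add₀ hu, zpow_sub₀ hu, zpow_add₀ hu, zpow_sub₀ hu]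
  simp only [zpow_neg, zpow_one]
  ring

def zpowAlternant {K : Type*} [Field K] {n : ℕ} (u : Fin n → K) (e : Fin n → ℤ) :
    Matrix (Fin n) (Fin n) K :=
  Matrix.of fun i j => u i ^ e j - u i ^ (-e j)

theorem prod_add_inv_mul_det_zpowAlternant_odd {K : Type*} [Field K] {n : ℕ} (u : Fin n → K) :
    (∏ i, (u i + (u i)⁻¹)) * (zpowAlternant u fun j => 2 * (n : ℤ) - 1 - 2 * j).det =
      (zpowAlternant u fun j => 2 * ((n : ℤ) - j)).det := by
  let v : ℕ → Fin n → K := fun k i => u i ^ (2 * ((n : ℤ) - k)) - u i ^ (-(2 * ((n : ℤ) - k)))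
  rw [← Matrix.det_mul_column]
  convert Matrix.det_of_add_succ_column v (by ext; simp [v]) using 2
  · ext i j
    simp only [zpowAlternant, Matrix.of_apply, add_inv_mul_zpow_sub_zpow_neg, v]
    push_cast
    ring_nf
  · rfl

theorem spin_odd_sp_denominator_general (r : ℕ) :
    let K := FractionRing (MvPolynomial (Fin r) ℚ)
    let u : Fin r → K := fun i => algebraMap (MvPolynomial (Fin r) ℚ) K (X i)
    (∏ i : Fin r, (u i + (u i)⁻¹)) *
    Matrix.det (Matrix.of fun i j : Fin r =>
        u i ^ (2 * (r : ℤ) - 1 - 2 * (j.val : ℤ)) -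
        u i ^ (-(2 * (r : ℤ) - 1 - 2 * (j.val : ℤ)))) =
    Matrix.det (Matrix.of fun i j : Fin r =>
        u i ^ (2 * ((r : ℤ) - (j.val : ℤ))) - u i ^ (-(2 * ((r : ℤ) - (j.val : ℤ))))) :=
  prod_add_inv_mul_det_zpowAlternant_odd _

/-- The Weyl-denominator identity relating Spin(2r+1) (spinor-shifted) and Sp(2r):
∏ᵢ (uᵢ + uᵢ⁻¹) · det[uᵢ^{2r+1−2j} − uᵢ^{−(2r+1−2j)}] = det[uᵢ^{2(r+1−j)} − uᵢ^{−2(r+1−j)}]. -/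
theorem spin_odd_sp_denominator (r : ℕ) (hr : 1 ≤ r) :
    let K := FractionRing (MvPolynomial (Fin r) ℚ)
    let u : Fin r → K := fun i => algebraMap (MvPolynomial (Fin r) ℚ) K (X i)
    (∏ i : Fin r, (u i + (u i)⁻¹)) *
    Matrix.det (Matrix.of fun i j : Fin r =>
        u i ^ (2 * (r : ℤ) - 1 - 2 * (j.val : ℤ)) -
        u i ^ (-(2 * (r : ℤ) - 1 - 2 * (j.val : ℤ)))) =
    Matrix.det (Matrix.of fun i j : Fin r =>
        u i ^ (2 * ((r : ℤ) - (j.val : ℤ))) - u i ^ (-(2 * ((r : ℤ) - (j.val : ℤ))))) :=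
  spin_odd_sp_denominator_general r
end

section
/- Let N ≥ 1 and consider the polynomial ring ℚ[e_1,…,e_N] in N indeterminates. Define polynomials h_m ∈ ℚ[e_1,…,e_N] for all integers m by: h_m = 0 for m < 0, h_0 = 1, and h_m = Σ_{j=1}^{N} (−1)^{j−1} e_j h_{m−j} for m ≥ 1. Then for every j with 1 ≤ j ≤ N and every integer m ≥ 0, the formal partial derivative satisfies ∂h_m/∂e_j = (−1)^{j+1} Σ_{n=0}^{m−j} h_n · h_{m−j−n} (the sum being empty, hence zero, when m < j). -/
open Finset MvPolynomial

/-- Derivatives of the complete homogeneous symmetric functions with respect to the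
elementary symmetric functions: ∂h_m/∂e_j = (−1)^{j+1} Σ_{n=0}^{m−j} h_n h_{m−j−n},
where the `h_m ∈ ℚ[e₁,…,e_N]` are defined by the recursion
`h_m = Σ_{j=1}^N (−1)^{j−1} e_j h_{m−j}` with `h_0 = 1` and `h_m = 0` for `m < 0`. -/
theorem pderiv_complete_homogeneous (N : ℕ) (hN : 1 ≤ N)
    (h : ℤ → MvPolynomial (Fin N) ℚ)
    (hneg : ∀ m : ℤ, m < 0 → h m = 0)
    (h0 : h 0 = 1)
    (hrec : ∀ m : ℤ, 1 ≤ m →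
      h m = ∑ j : Fin N, (-1 : MvPolynomial (Fin N) ℚ) ^ j.val * X j * h (m - (j.val + 1))) :
    ∀ (j : Fin N) (m : ℤ), 0 ≤ m →
      MvPolynomial.pderiv j (h m) =
        (-1 : MvPolynomial (Fin N) ℚ) ^ ((j.val + 1) + 1) *
          ∑ n ∈ Finset.Icc (0 : ℤ) (m - (j.val + 1)), h n * h (m - (j.val + 1) - n) := by
  intro j m hm
  have hsgn : ((-1 : MvPolynomial (Fin N) ℚ)) ^ ((j.val + 1) + 1) = (-1) ^ j.val := by
    rw [pow_succ, pow_succ]; ring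
  rw [hsgn]
  set d : ℤ := (j.val : ℤ) + 1 with hd
  have hd1 : 1 ≤ d := by omega
  obtain ⟨n, rfl⟩ := Int.eq_ofNat_of_zero_le hm
  clear hm
  induction n using Nat.strong_induction_on with
  | _ n IH =>
    have key : ∀ t : ℤ, t < (n : ℤ) → pderiv j (h t) =
        (-1 : MvPolynomial (Fin N) ℚ) ^ j.val *
          ∑ x ∈ Finset.Icc (0:ℤ) (t - d), h x * h (t - d - x) := by
      intro t ht
      rcases lt_or_ge t 0 with h1 | h1
      · rw [hneg t h1, map_zero, Finset.Icc_eq_empty (by omega), Finset.sum_empty, mul_zero]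
      · obtain ⟨t', rfl⟩ := Int.eq_ofNat_of_zero_le h1
        exact IH t' (by exact_mod_cast ht)
    rcases Nat.eq_zero_or_pos n with rfl | hn
    · rw [Nat.cast_zero, h0, pderiv_one, Finset.Icc_eq_empty (by omega), Finset.sum_empty, mul_zero]
    · rw [hrec n (by exact_mod_cast hn), map_sum]
      have hterm : ∀ k : Fin N,
          pderiv j ((-1:MvPolynomial (Fin N) ℚ)^k.val * X k * h ((n:ℤ) - (k.val+1))) =
          (if k = j then (-1:MvPolynomial (Fin N) ℚ)^j.val * h ((n:ℤ) - d) else 0) +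
            (-1:MvPolynomial (Fin N) ℚ)^j.val *
              ((-1:MvPolynomial (Fin N) ℚ)^k.val * X k *
                ∑ x ∈ Finset.Icc (0:ℤ) ((n:ℤ) - d - 1), h x * h ((n:ℤ) - (k.val+1) - d - x)) := by
        intro k
        have hC : ((-1:MvPolynomial (Fin N) ℚ))^k.val = C ((-1:ℚ)^k.val) := by
          simp
        have hlt : (n:ℤ) - (k.val+1) < (n:ℤ) := by omega
        have hkey := key ((n:ℤ) - (k.val+1)) hlt
        -- extend the Icc in hkey
        have hext : ∑ x ∈ Finset.Icc (0:ℤ) ((n:ℤ) - (k.val+1) - d), h x * h ((n:ℤ) - (k.val+1) - d - x)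
            = ∑ x ∈ Finset.Icc (0:ℤ) ((n:ℤ) - d - 1), h x * h ((n:ℤ) - (k.val+1) - d - x) := by
          apply Finset.sum_subset
          · apply Finset.Icc_subset_Icc_right; omega
          · intro x hx hx'
            simp only [Finset.mem_Icc] at hx hx'
            rw [hneg ((n:ℤ) - (k.val+1) - d - x) (by omega), mul_zero]
        rw [mul_assoc, hC, pderiv_C_mul, pderiv_mul, hkey, hext, ← hC]
        rcases eq_or_ne k j with rfl | hkj
        · rw [if_pos rfl, pderiv_X_self, one_mul, mul_add]
          ring
        · rw [if_neg hkj, pderiv_X_of_ne hkj, zero_mul, zero_add]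
          ring
      rw [Finset.sum_congr rfl (fun k _ => hterm k), Finset.sum_add_distrib]
      rw [Finset.sum_ite_eq' Finset.univ j
        (fun k => (-1:MvPolynomial (Fin N) ℚ)^j.val * h ((n:ℤ) - d)), if_pos (Finset.mem_univ j)]
      rw [← Finset.mul_sum]
      -- swap the double sum and apply the recursion
      have hswap : ∑ k : Fin N, ((-1:MvPolynomial (Fin N) ℚ)^k.val * X k *
            ∑ x ∈ Finset.Icc (0:ℤ) ((n:ℤ) - d - 1), h x * h ((n:ℤ) - (k.val+1) - d - x))
          = ∑ x ∈ Finset.Icc (0:ℤ) ((n:ℤ) - d - 1), h x * h ((n:ℤ) - d - x) := by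
        simp_rw [Finset.mul_sum]
        rw [Finset.sum_comm]
        refine Finset.sum_congr rfl fun x hx => ?_
        simp only [Finset.mem_Icc] at hx
        have h1 : (1:ℤ) ≤ (n:ℤ) - d - x := by omega
        rw [hrec ((n:ℤ) - d - x) h1, Finset.mul_sum]
        refine Finset.sum_congr rfl fun k _ => ?_
        have : (n:ℤ) - d - x - (k.val+1) = (n:ℤ) - (k.val+1) - d - x := by ring
        rw [this]; ring
      rw [hswap]
      -- split off the top term of the Icc
      rcases lt_or_ge ((n:ℤ) - d) 0 with hnd | hnd
      · rw [Finset.Icc_eq_empty (by omega : ¬ (0:ℤ) ≤ (n:ℤ) - d),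
          Finset.Icc_eq_empty (by omega : ¬ (0:ℤ) ≤ (n:ℤ) - d - 1),
          hneg ((n:ℤ) - d) hnd]
        simp
      · have hins : Finset.Icc (0:ℤ) ((n:ℤ) - d)
            = insert ((n:ℤ) - d) (Finset.Icc (0:ℤ) ((n:ℤ) - d - 1)) := by
          ext x
          simp only [Finset.mem_Icc, Finset.mem_insert]
          omega
        rw [hins, Finset.sum_insert (by simp only [Finset.mem_Icc]; omega)]
        have : (n:ℤ) - d - ((n:ℤ) - d) = 0 := by ring
        rw [this, h0, mul_one, mul_add]
end

section
/- Let N ≥ 1 and consider the polynomial ring ℚ[e_1,…,e_N]. Define h_m ∈ ℚ[e_1,…,e_N] by h_m = 0 for m < 0, h_0 = 1, and h_m = Σ_{j=1}^{N} (−1)^{j−1} e_j h_{m−j} for m ≥ 1. Then for all i, j with 1 ≤ i, j ≤ N and every integer m, the cross-derivative symmetry (−1)^{i−1} · ∂h_{m−i}/∂e_j = (−1)^{j−1} · ∂h_{m−j}/∂e_i holds. (This is the closedness of the 1-form Σ_i (−1)^{i−1} h_{m−i} de_i, which guarantees that the derivatives of the SU(r+1) and Sp(2r) fusion potentials integrate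 to a potential.) -/
open Finset MvPolynomial

/-- Closedness of the 1-form Σᵢ (−1)^{i−1} h_{m−i} deᵢ: the cross-derivative symmetry
(−1)^{i−1} ∂h_{m−i}/∂e_j = (−1)^{j−1} ∂h_{m−j}/∂e_i, where the `h_m ∈ ℚ[e₁,…,e_N]`
are defined by the recursion `h_m = Σ_{j=1}^N (−1)^{j−1} e_j h_{m−j}` with `h_0 = 1`
and `h_m = 0` for `m < 0`. -/
theorem closed_one_form_complete_homogeneous (N : ℕ) (hN : 1 ≤ N)
    (h : ℤ → MvPolynomial (Fin N) ℚ)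
    (hneg : ∀ m : ℤ, m < 0 → h m = 0)
    (h0 : h 0 = 1)
    (hrec : ∀ m : ℤ, 1 ≤ m →
      h m = ∑ j : Fin N, (-1 : MvPolynomial (Fin N) ℚ) ^ j.val * X j * h (m - (j.val + 1))) :
    ∀ (i j : Fin N) (m : ℤ),
      (-1 : MvPolynomial (Fin N) ℚ) ^ i.val * MvPolynomial.pderiv j (h (m - (i.val + 1))) =
      (-1 : MvPolynomial (Fin N) ℚ) ^ j.val * MvPolynomial.pderiv i (h (m - (j.val + 1))) := by
  have hC : ∀ (l : ℕ) (j : Fin N),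
      pderiv j ((-1 : MvPolynomial (Fin N) ℚ) ^ l) = 0 := by
    intro l j
    have : ((-1 : MvPolynomial (Fin N) ℚ)) ^ l = C ((-1 : ℚ) ^ l) := by
      rw [map_pow, map_neg, map_one]
    rw [this, pderiv_C]
  -- h m involves only variables e_1, ..., e_m, so pderiv i kills it when m ≤ i
  have hA : ∀ n : ℕ, ∀ m : ℤ, m ≤ (n : ℤ) → ∀ i : Fin N, m ≤ (i.val : ℤ) →
      pderiv i (h m) = 0 := by
    intro n
    induction n using Nat.strong_induction_on with
    | _ n ih =>
      intro m hm i him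
      rcases lt_or_ge m 1 with hm1 | hm1
      · rcases lt_or_ge m 0 with h' | h'
        · rw [hneg m h']; simp
        · have hm0 : m = 0 := by omega
          rw [hm0, h0, pderiv_one]
      · rw [hrec m hm1, map_sum]
        apply Finset.sum_eq_zero
        intro l _
        have hderiv_t : pderiv i (h (m - ((l.val : ℤ) + 1))) = 0 := by
          refine ih (n - 1) (by omega) _ (by omega) i (by omega)
        rw [pderiv_mul, hderiv_t, mul_zero, add_zero, pderiv_mul, hC, zero_mul, zero_add]
        rcases eq_or_ne l i with rfl | hne
        · rw [hneg (m - ((l.val : ℤ) + 1)) (by omega), mul_zero]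
        · rw [pderiv_X_of_ne hne, mul_zero, zero_mul]
  have hB : ∀ n : ℕ, ∀ m : ℤ, m ≤ (n : ℤ) → ∀ i j : Fin N,
      (-1 : MvPolynomial (Fin N) ℚ) ^ i.val * pderiv j (h (m - (i.val + 1))) =
      (-1 : MvPolynomial (Fin N) ℚ) ^ j.val * pderiv i (h (m - (j.val + 1))) := by
    intro n
    induction n using Nat.strong_induction_on with
    | _ n ih =>
      intro m hm i j
      rcases le_or_gt m ((i.val : ℤ) + j.val + 1) with hsmall | hbig
      · rw [hA n _ (by omega) j (by omega), hA n _ (by omega) i (by omega),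
          mul_zero, mul_zero]
      · have step : ∀ a b : Fin N, 1 ≤ m - ((a.val : ℤ) + 1) →
            (-1 : MvPolynomial (Fin N) ℚ) ^ a.val * pderiv b (h (m - (a.val + 1))) =
            (-1 : MvPolynomial (Fin N) ℚ) ^ a.val * (-1) ^ b.val *
                h (m - ((a.val : ℤ) + 1) - ((b.val : ℤ) + 1)) +
              ∑ l : Fin N, (-1 : MvPolynomial (Fin N) ℚ) ^ l.val * X l *
                ((-1 : MvPolynomial (Fin N) ℚ) ^ a.val *
                  pderiv b (h (m - ((a.val : ℤ) + 1) - ((l.val : ℤ) + 1)))) := by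
          intro a b hab
          rw [hrec _ hab, map_sum, Finset.mul_sum]
          have hterm : ∀ l : Fin N, l ∈ (univ : Finset (Fin N)) →
              (-1 : MvPolynomial (Fin N) ℚ) ^ a.val *
                pderiv b ((-1 : MvPolynomial (Fin N) ℚ) ^ l.val * X l *
                  h (m - ((a.val : ℤ) + 1) - ((l.val : ℤ) + 1))) =
              (if l = b then (-1 : MvPolynomial (Fin N) ℚ) ^ a.val * (-1) ^ b.val *
                  h (m - ((a.val : ℤ) + 1) - ((b.val : ℤ) + 1)) else 0) +
                (-1 : MvPolynomial (Fin N) ℚ) ^ l.val * X l *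
                  ((-1 : MvPolynomial (Fin N) ℚ) ^ a.val *
                    pderiv b (h (m - ((a.val : ℤ) + 1) - ((l.val : ℤ) + 1)))) := by
            intro l _
            rw [pderiv_mul, pderiv_mul, hC, zero_mul, zero_add]
            rcases eq_or_ne l b with rfl | hne
            · rw [if_pos rfl, pderiv_X_self]; ring
            · rw [if_neg hne, pderiv_X_of_ne hne, mul_zero, zero_mul, zero_add]; ring
          rw [Finset.sum_congr rfl hterm, Finset.sum_add_distrib,
            Finset.sum_ite_eq' univ b, if_pos (mem_univ b)]
        rw [step i j (by omega), step j i (by omega)]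
        have harg : m - ((i.val : ℤ) + 1) - ((j.val : ℤ) + 1) =
            m - ((j.val : ℤ) + 1) - ((i.val : ℤ) + 1) := by ring
        congr 1
        · rw [harg]; ring
        · apply Finset.sum_congr rfl
          intro l _
          have e1 : m - ((i.val : ℤ) + 1) - ((l.val : ℤ) + 1) =
              m - ((l.val : ℤ) + 1) - ((i.val : ℤ) + 1) := by ring
          have e2 : m - ((j.val : ℤ) + 1) - ((l.val : ℤ) + 1) =
              m - ((l.val : ℤ) + 1) - ((j.val : ℤ) + 1) := by ring
          rw [e1, e2, ih (n - 1) (by omega) (m - ((l.val : ℤ) + 1)) (by omega) i j]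
  intro i j m
  exact hB m.toNat m (by omega) i j
end

section
/- Let n ≥ 1 and fix a distinguished index 0 in {0,1,…,n−1}. Suppose N_0, N_1, …, N_{n−1} are n×n complex matrices such that the 0-th row of each N_a is the a-th standard basis vector, i.e. (N_a)_{0c} = δ_{ac} for all a, c. Suppose U is an n×n unitary matrix and D_0,…,D_{n−1} are diagonal matrices with N_a U = U D_a for all a. Then for every column index d one has U_{0d} ≠ 0, and the eigenvalues are completely determined: (D_a)_{dd} = U_{ad} / U_{0d} for all a and d. -/
open Matrix

/-- A commuting family of fusion matrices whose 0-th rows are standard basis vectors,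
simultaneously diagonalized by a unitary matrix U, has nonvanishing U₀d and eigenvalues
given by the ratios U_{ad}/U_{0d}. -/
theorem fusion_matrix_eigenvalues (n : ℕ) (hn : 1 ≤ n)
    (Nmat : Fin n → Matrix (Fin n) (Fin n) ℂ)
    (U : Matrix (Fin n) (Fin n) ℂ)
    (D : Fin n → Matrix (Fin n) (Fin n) ℂ)
    (hrow : ∀ a c : Fin n, Nmat a ⟨0, hn⟩ c = if a = c then 1 else 0)
    (hU : U ∈ Matrix.unitaryGroup (Fin n) ℂ)
    (hdiag : ∀ a, (D a).IsDiag)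
    (hdiagonalize : ∀ a, Nmat a * U = U * D a) :
    (∀ d : Fin n, U ⟨0, hn⟩ d ≠ 0) ∧
    (∀ a d : Fin n, D a d d = U a d / U ⟨0, hn⟩ d) := by
  have key : ∀ a d : Fin n, U a d = U ⟨0, hn⟩ d * D a d d := by
    intro a d
    have h := congrFun (congrFun (hdiagonalize a) ⟨0, hn⟩) d
    simp only [Matrix.mul_apply] at h
    rw [Finset.sum_congr rfl (fun c _ => by rw [hrow a c])] at h
    simp only [ite_mul, one_mul, zero_mul] at h
    rw [Finset.sum_ite_eq Finset.univ a (fun c => U c d)] at h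
    simp only [Finset.mem_univ, if_true] at h
    rw [h]
    rw [Finset.sum_eq_single d]
    · intro c _ hc
      rw [hdiag a hc, mul_zero]
    · intro h'; simp at h'
  have hnz : ∀ d : Fin n, U ⟨0, hn⟩ d ≠ 0 := by
    intro d h0
    have hcol : ∀ a : Fin n, U a d = 0 := fun a => by rw [key a d, h0, zero_mul]
    have h1 := hU.1
    have h2 := congrFun (congrFun h1 d) d
    simp only [Matrix.mul_apply, Matrix.one_apply_eq, Matrix.conjTranspose_apply] at h2
    rw [Finset.sum_congr rfl (fun a _ => by rw [hcol a, mul_zero])] at h2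
    simp at h2
  refine ⟨hnz, fun a d => ?_⟩
  rw [key a d, mul_comm, mul_div_assoc, div_self (hnz d), mul_one]
end

section
/- Let n ≥ 1, fix a distinguished index 0 in {0,…,n−1}, and let S be an n×n complex matrix that is unitary and symmetric (S^T = S) with S_{0d} ≠ 0 for every d. Define the Verlinde numbers N_{ab}^c = Σ_d S_{ad} S_{bd} conj(S_{cd}) / S_{0d}. Then the vectors π_a ∈ ℂ^n with components (π_a)_c = S_{0a} · conj(S_{ac}) are orthogonal idempotents for the product with structure constants N: explicitly, for all a, b, c, Σ_{e,f} (π_a)_e (π_b)_f N_{ef}^c = δ_{ab} · (π_b)_c. -/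
/-!
Unitarity and symmetry of `S` say that `∑ₑ conj(S a e) S e d = δ_{ad}`, i.e. that `S`
diagonalises every product whose structure constants have the Verlinde shape
`∑_d S_{ed} S_{fd} conj(S_{cd}) w_d`: in the basis `e ↦ conj(S a e)` it becomes the
pointwise product weighted by `w`. With `w_d = 1 / S_{0d}`, rescaling the basis by `S_{0a}`
makes each basis vector idempotent.
-/

open Matrix Finset

namespace Matrix

variable {ι R : Type*} [Fintype ι] [DecidableEq ι] [CommRing R] [StarRing R]
  {S : Matrix ι ι R}

theorem sum_star_mul_eq_ite_of_transpose_eq (hS : S ∈ unitaryGroup ι R) (hsymm : S.IsSymm)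
    (a d : ι) : ∑ e, star (S a e) * S e d = if a = d then 1 else 0 := by
  have h := congrFun (congrFun (mem_unitaryGroup_iff'.mp hS) a) d
  rw [mul_apply, one_apply] at h
  rw [← h]
  refine sum_congr rfl fun e _ => ?_
  rw [star_apply, hsymm.apply]

theorem sum_sum_star_mul_star_mul_verlinde (hS : S ∈ unitaryGroup ι R) (hsymm : S.IsSymm)
    (w : ι → R) (a b c : ι) :
    ∑ e, ∑ f, star (S a e) * star (S b f) * ∑ d, S e d * S f d * star (S c d) * w d =
      if a = b then star (S c a) * w a else 0 := by
  calc ∑ e, ∑ f, star (S a e) * star (S b f) * ∑ d, S e d * S f d * star (S c d) * w d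
      = ∑ e, ∑ f, ∑ d, star (S a e) * S e d * (star (S b f) * S f d) * (star (S c d) * w d) := by
        simp only [mul_sum]
        exact sum_congr rfl fun e _ => sum_congr rfl fun f _ => sum_congr rfl fun d _ => by ring
    _ = ∑ d, ∑ e, ∑ f, star (S a e) * S e d * (star (S b f) * S f d) * (star (S c d) * w d) :=
        (sum_congr rfl fun e _ => sum_comm).trans sum_comm
    _ = ∑ d, (∑ e, star (S a e) * S e d) * (∑ f, star (S b f) * S f d) *
          (star (S c d) * w d) := by
        simp only [sum_mul, mul_sum]
        exact sum_congr rfl fun d _ => sum_comm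
    _ = if a = b then star (S c a) * w a else 0 := by
        simp only [sum_star_mul_eq_ite_of_transpose_eq hS hsymm, ite_mul, one_mul, zero_mul,
          sum_ite_eq, if_pos (mem_univ a)]
        exact if_congr eq_comm rfl rfl

end Matrix

/-- For a symmetric unitary S-matrix with nonvanishing 0-th row, the vectors
π_a with components (π_a)_c = S₀ₐ · conj(Sₐ_c) are orthogonal idempotents for the
product whose structure constants are the Verlinde numbers
N_{ab}^c = Σ_d S_{ad} S_{bd} conj(S_{cd}) / S_{0d}. -/
theorem verlinde_orthogonal_idempotents (n : ℕ) (hn : 1 ≤ n)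
    (S : Matrix (Fin n) (Fin n) ℂ)
    (hS : S ∈ Matrix.unitaryGroup (Fin n) ℂ)
    (hsymm : Sᵀ = S)
    (hnz : ∀ d : Fin n, S ⟨0, hn⟩ d ≠ 0) :
    ∀ a b c : Fin n,
      (∑ e : Fin n, ∑ f : Fin n,
        (S ⟨0, hn⟩ a * starRingEnd ℂ (S a e)) * (S ⟨0, hn⟩ b * starRingEnd ℂ (S b f)) *
          (∑ d : Fin n, S e d * S f d * starRingEnd ℂ (S c d) / S ⟨0, hn⟩ d)) =
      (if a = b then 1 else 0) * (S ⟨0, hn⟩ b * starRingEnd ℂ (S b c)) := by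
  intro a b c
  set s := S ⟨0, hn⟩
  calc ∑ e, ∑ f, (s a * starRingEnd ℂ (S a e)) * (s b * starRingEnd ℂ (S b f)) *
        (∑ d, S e d * S f d * starRingEnd ℂ (S c d) / s d)
      = s a * s b * ∑ e, ∑ f, star (S a e) * star (S b f) *
          ∑ d, S e d * S f d * star (S c d) * (s d)⁻¹ := by
        simp only [mul_sum, starRingEnd_apply, div_eq_mul_inv]
        refine sum_congr rfl fun e _ => sum_congr rfl fun f _ => sum_congr rfl fun d _ => ?_
        ring
    _ = (if a = b then 1 else 0) * (s b * starRingEnd ℂ (S b c)) := by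
        rw [sum_sum_star_mul_star_mul_verlinde hS hsymm (fun d => (s d)⁻¹)]
        split_ifs with hab
        · subst hab
          rw [starRingEnd_apply, IsSymm.apply hsymm]
          field_simp [hnz a]
        · simp
end

section
/- Let r ≥ 1 and work in the field ℚ(u_1,…,u_r) of rational functions in r indeterminates over ℚ. Then the Weyl denominator of Spin(2r+1) factors as det[ u_i^{2(r − j) + 1} − u_i^{−(2(r − j) + 1)} ]_{i,j=1}^{r} = ∏_{i=1}^{r} (u_i − u_i^{−1}) · det[ (u_i^2 + u_i^{−2})^{r − j} ]_{i,j=1}^{r}. -/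
/-!
Writing `w = u⁻¹`, the entries `e_k = u^(2k+1) - w^(2k+1)` satisfy
`e_(k+2) = (u² + w²) e_(k+1) - e_k` because `u w = 1`. Hence `e_k = (u - w) W_k(u² + w²)` for
the polynomials `W_k` given by the same recursion, which are monic of degree `k`. Pulling the
factors `u_i - u_i⁻¹` out of the rows, the remaining determinant is that of monic polynomials
of degrees `r - 1, …, 0` evaluated at `u_i² + u_i⁻²`, which equals the Vandermonde-type
determinant by column operations.
-/

namespace Polynomial

/-- Rescaled Chebyshev polynomials of the fourth kind: `W k (x + x⁻¹) = x⁻ᵏ + ⋯ + xᵏ`. -/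
noncomputable def rescaledChebyshevW (R : Type*) [CommRing R] : ℕ → R[X]
  | 0 => 1
  | 1 => X + 1
  | k + 2 => X * rescaledChebyshevW R (k + 1) - rescaledChebyshevW R k

variable {R : Type*} [CommRing R]

theorem rescaledChebyshevW_monic_and_natDegree [Nontrivial R] (k : ℕ) :
    (rescaledChebyshevW R k).Monic ∧ (rescaledChebyshevW R k).natDegree = k := by
  induction k using Nat.twoStepInduction with
  | zero => exact ⟨monic_one, natDegree_one⟩
  | one => exact ⟨monic_X_add_C 1, natDegree_X_add_C 1⟩
  | more k ih₀ ih₁ =>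
    obtain ⟨-, hd₀⟩ := ih₀
    obtain ⟨hm₁, hd₁⟩ := ih₁
    have hXm : (X * rescaledChebyshevW R (k + 1)).Monic := monic_X.mul hm₁
    have hXd : (X * rescaledChebyshevW R (k + 1)).natDegree = k + 2 := by
      rw [natDegree_X_mul hm₁.ne_zero, hd₁]
    have hlt : (rescaledChebyshevW R k).natDegree < (X * rescaledChebyshevW R (k + 1)).natDegree :=
      by omega
    refine ⟨hXm.sub_of_left (degree_lt_degree hlt), ?_⟩
    rw [rescaledChebyshevW, natDegree_sub_eq_left_of_natDegree_lt hlt, hXd]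

theorem pow_sub_pow_eq_sub_mul_eval_rescaledChebyshevW {u w : R} (huw : u * w = 1) (k : ℕ) :
    u ^ (2 * k + 1) - w ^ (2 * k + 1) =
      (u - w) * (rescaledChebyshevW R k).eval (u ^ 2 + w ^ 2) := by
  induction k using Nat.twoStepInduction with
  | zero => simp [rescaledChebyshevW]
  | one =>
    simp only [rescaledChebyshevW, eval_add, eval_X, eval_one]
    linear_combination (u - w) * huw
  | more k ih₀ ih₁ =>
    simp only [rescaledChebyshevW, eval_sub, eval_mul, eval_X]
    linear_combination (u ^ 2 + w ^ 2) * ih₁ - ih₀ -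
      (u ^ (2 * k + 1) - w ^ (2 * k + 1)) * (u * w + 1) * huw

theorem zpow_sub_zpow_neg_eq_sub_inv_mul_eval_rescaledChebyshevW {K : Type*} [Field K] {u : K}
    (hu : u ≠ 0) (k : ℕ) :
    u ^ (2 * (k : ℤ) + 1) - u ^ (-(2 * (k : ℤ) + 1)) =
      (u - u⁻¹) * (rescaledChebyshevW K k).eval (u ^ 2 + (u ^ 2)⁻¹) := by
  have hcast : 2 * (k : ℤ) + 1 = ((2 * k + 1 : ℕ) : ℤ) := by push_cast; ring
  rw [hcast, zpow_neg, zpow_natCast, ← inv_pow, ← inv_pow]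
  exact pow_sub_pow_eq_sub_mul_eval_rescaledChebyshevW (mul_inv_cancel₀ hu) k

end Polynomial

open Polynomial in
theorem Matrix.det_eval_rev_eq_det_pow_rev {R : Type*} [CommRing R] {n : ℕ} (v : Fin n → R)
    (p : ℕ → R[X]) (h_deg : ∀ i, (p i).natDegree = i) (h_monic : ∀ i, (p i).Monic) :
    (Matrix.of fun i j : Fin n => (p (n - 1 - j)).eval (v i)).det =
      (Matrix.of fun i j : Fin n => v i ^ (n - 1 - j)).det := by
  have hp : Matrix.of (fun i j : Fin n => (p (n - 1 - j)).eval (v i)) =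
      (Matrix.of fun i j : Fin n => (p j).eval (v i)).submatrix id Fin.revPerm := by
    ext i j
    simp [Fin.val_rev, Nat.sub_sub, add_comm]
  have hv : Matrix.of (fun i j : Fin n => v i ^ (n - 1 - j)) =
      (Matrix.vandermonde v).submatrix id Fin.revPerm := by
    ext i j
    simp [Fin.val_rev, Nat.sub_sub, add_comm]
  rw [hp, hv, det_permute', det_permute',
    det_eval_matrixOfPolynomials_eq_det_vandermonde v (fun i => p i) (fun i => h_deg i)
      (fun i => h_monic i)]

open Finset MvPolynomial

theorem spin_odd_weyl_denominator_factorization_general (r : ℕ) :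
    let K := FractionRing (MvPolynomial (Fin r) ℚ)
    let u : Fin r → K := fun i => algebraMap (MvPolynomial (Fin r) ℚ) K (X i)
    Matrix.det (Matrix.of fun i j : Fin r =>
        u i ^ (2 * ((r : ℤ) - 1 - (j.val : ℤ)) + 1) -
        u i ^ (-(2 * ((r : ℤ) - 1 - (j.val : ℤ)) + 1))) =
    (∏ i : Fin r, (u i - (u i)⁻¹)) *
    Matrix.det (Matrix.of fun i j : Fin r =>
        (u i ^ 2 + (u i ^ 2)⁻¹) ^ (r - 1 - j.val)) := by
  intro K u
  have hu : ∀ i, u i ≠ 0 := fun i =>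
    (map_ne_zero_iff _ (IsFractionRing.injective (MvPolynomial (Fin r) ℚ) K)).mpr (X_ne_zero i)
  let W := Polynomial.rescaledChebyshevW K
  let v : Fin r → K := fun i => u i ^ 2 + (u i ^ 2)⁻¹
  calc _ = (Matrix.of fun i j : Fin r => (u i - (u i)⁻¹) * (W (r - 1 - j)).eval (v i)).det := by
        congr 1
        ext i j
        have hexp : (r : ℤ) - 1 - (j.val : ℤ) = ((r - 1 - j.val : ℕ) : ℤ) := by omega
        rw [Matrix.of_apply, Matrix.of_apply, hexp]
        exact Polynomial.zpow_sub_zpow_neg_eq_sub_inv_mul_eval_rescaledChebyshevW (hu i) _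
    _ = (∏ i, (u i - (u i)⁻¹)) *
          (Matrix.of fun i j : Fin r => (W (r - 1 - j)).eval (v i)).det :=
        Matrix.det_mul_column _ _
    _ = _ := by
        rw [Matrix.det_eval_rev_eq_det_pow_rev v W
          (fun k => (Polynomial.rescaledChebyshevW_monic_and_natDegree k).2)
          (fun k => (Polynomial.rescaledChebyshevW_monic_and_natDegree k).1)]

/-- Factorization of the Weyl denominator of Spin(2r+1):
det[uᵢ^{2(r−j)+1} − uᵢ^{−(2(r−j)+1)}] = ∏ᵢ (uᵢ − uᵢ⁻¹) · det[(uᵢ² + uᵢ⁻²)^{r−j}]. -/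
theorem spin_odd_weyl_denominator_factorization (r : ℕ) (hr : 1 ≤ r) :
    let K := FractionRing (MvPolynomial (Fin r) ℚ)
    let u : Fin r → K := fun i => algebraMap (MvPolynomial (Fin r) ℚ) K (X i)
    Matrix.det (Matrix.of fun i j : Fin r =>
        u i ^ (2 * ((r : ℤ) - 1 - (j.val : ℤ)) + 1) -
        u i ^ (-(2 * ((r : ℤ) - 1 - (j.val : ℤ)) + 1))) =
    (∏ i : Fin r, (u i - (u i)⁻¹)) *
    Matrix.det (Matrix.of fun i j : Fin r =>
        (u i ^ 2 + (u i ^ 2)⁻¹) ^ (r - 1 - j.val)) :=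
  spin_odd_weyl_denominator_factorization_general r
end
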